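/- The set K = ⋂_{ℓ∈ℕ} co(Z^ℓ) is a nonempty convex polytope: K is nonempty, compact and convex, and there exists a finite set F ⊂ ℝ^d of at most n points such that K equals the convex hull of F. -/

import Mathlib

/-! The update moves each token towards the centroid of its attention set by a factor
`α / (1 + α) ∈ [0, 1]`, so every token stays in the convex hull of the previous configuration
and the hulls `co(Z^k)` decrease. The configurations lie in the compact set `co(Z^0)ⁿ`, so a
subsequence converges to some `w`. Each `w_i` lies in every `co(Z^k)`, hence `co(w) ⊆ K`;
conversely, once `Z^{φ m}` is `ε`-close to `w` coordinatewise, `K ⊆ co(Z^{φ m})` lies in the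
`ε`-thickening of `co(w)`, and `co(w)` is closed. So `K = co(w)`, a polytope with at most `n`
vertices. -/

open scoped RealInnerProductSpace BigOperators Classical
open Filter Metric

noncomputable section

/-- The hardmax attention (argmax) index set `C_i` for a token configuration `z`
(attention matrix `A = I`): the set of indices `j` maximizing `⟪z_i, z_j⟫`. -/
def attn {d n : ℕ} (z : Fin n → EuclideanSpace ℝ (Fin d)) (i : Fin n) : Finset (Fin n) :=
  Finset.univ.filter fun j => (⟪z i, z j⟫ = ⨆ ℓ, ⟪z i, z ℓ⟫)

/-- The pure-attention hardmax transformer dynamics with step-size `α > 0` and `A = I`: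
`z_i^{k+1} = z_i^k + (α/(1+α))·(1/|C_i^k|)·Σ_{j ∈ C_i^k} (z_j^k − z_i^k)`. -/
def IsDyn {d n : ℕ} (α : ℝ) (z : ℕ → Fin n → EuclideanSpace ℝ (Fin d)) : Prop :=
  ∀ k i, z (k + 1) i = z k i +
    (α / (1 + α)) • (((attn (z k) i).card : ℝ)⁻¹ • ∑ j ∈ attn (z k) i, (z k j - z k i))

/-- The limiting set `K = ⋂ₖ co(Z^k)`, the intersection of the convex hulls of the token
configurations over all times. -/
def limitK {d n : ℕ} (z : ℕ → Fin n → EuclideanSpace ℝ (Fin d)) :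
    Set (EuclideanSpace ℝ (Fin d)) :=
  ⋂ k, convexHull ℝ (Set.range (z k))

open Topology Set Finset

section ConvexHull

variable {ι E : Type*}

lemma inv_card_smul_sum_sub [AddCommGroup E] [Module ℝ E] {s : Finset ι} (hs : s.Nonempty)
    (p : ι → E) (x : E) :
    (#s : ℝ)⁻¹ • ∑ j ∈ s, (p j - x) = (#s : ℝ)⁻¹ • ∑ j ∈ s, p j - x := by
  have hcard : (#s : ℝ) ≠ 0 := by exact_mod_cast hs.card_ne_zero
  rw [sum_sub_distrib, sum_const, smul_sub, ← Nat.cast_smul_eq_nsmul ℝ, smul_smul,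
    inv_mul_cancel₀ hcard, one_smul]

lemma inv_card_smul_sum_mem_convexHull [AddCommGroup E] [Module ℝ E] {s : Finset ι}
    (hs : s.Nonempty) (p : ι → E) :
    (#s : ℝ)⁻¹ • ∑ j ∈ s, p j ∈ convexHull ℝ (range p) := by
  have hcard : (#s : ℝ) ≠ 0 := by exact_mod_cast hs.card_ne_zero
  rw [smul_sum]
  exact (convex_convexHull ℝ _).sum_mem (fun _ _ => by positivity)
    (by rw [sum_const, nsmul_eq_mul, mul_inv_cancel₀ hcard])
    (fun j _ => subset_convexHull ℝ _ ⟨j, rfl⟩)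

variable [NormedAddCommGroup E] [NormedSpace ℝ E]

lemma convexHull_range_subset_thickening {u w : ι → E} {ε : ℝ}
    (h : ∀ i, dist (u i) (w i) < ε) :
    convexHull ℝ (range u) ⊆ thickening ε (convexHull ℝ (range w)) := by
  refine convexHull_min ?_ ((convex_convexHull ℝ _).thickening ε)
  rintro _ ⟨i, rfl⟩
  exact mem_thickening_iff.2 ⟨w i, subset_convexHull ℝ _ ⟨i, rfl⟩, h i⟩

variable [Finite ι]

lemma mem_convexHull_range_of_tendsto {u : ℕ → ι → E} {w : ι → E}
    (hu : Tendsto u atTop (𝓝 w)) {x : E} (hx : ∀ m, x ∈ convexHull ℝ (range (u m))) :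
    x ∈ convexHull ℝ (range w) := by
  rw [← ((finite_range w).isCompact_convexHull ℝ).isClosed.closure_eq, Metric.mem_closure_iff]
  intro ε hε
  have hclose : ∀ᶠ m in atTop, ∀ i, dist (u m i) (w i) < ε :=
    eventually_all.2 fun i => (tendsto_pi_nhds.1 hu i).eventually (ball_mem_nhds _ hε)
  obtain ⟨m, hm⟩ := hclose.exists
  exact mem_thickening_iff.1 (convexHull_range_subset_thickening hm (hx m))

theorem exists_iInter_convexHull_eq_convexHull_range (z : ℕ → ι → E)
    (hz : Antitone fun k => convexHull ℝ (range (z k))) :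
    ∃ w : ι → E, ⋂ k, convexHull ℝ (range (z k)) = convexHull ℝ (range w) := by
  set co := fun k => convexHull ℝ (range (z k))
  have hclosed : ∀ k, IsClosed (co k) := fun k =>
    ((finite_range (z k)).isCompact_convexHull ℝ).isClosed
  have hmem : ∀ k i, z k i ∈ co k := fun k i => subset_convexHull ℝ _ ⟨i, rfl⟩
  obtain ⟨w, -, φ, hφ, hw⟩ := (isCompact_univ_pi fun _ : ι =>
    (finite_range (z 0)).isCompact_convexHull ℝ).tendsto_subseq
    (x := z) fun k i _ => hz (Nat.zero_le k) (hmem k i)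
  have hwK : ∀ i k, w i ∈ co k := fun i k =>
    (hclosed k).mem_of_tendsto (tendsto_pi_nhds.1 hw i) <|
      (eventually_ge_atTop k).mono fun m hm => hz (hm.trans hφ.le_apply) (hmem (φ m) i)
  refine ⟨w, Subset.antisymm (fun x hx => ?_) ?_⟩
  · exact mem_convexHull_range_of_tendsto hw fun m => mem_iInter.1 hx (φ m)
  · exact subset_iInter fun k =>
      convexHull_min (range_subset_iff.2 fun i => hwK i k) (convex_convexHull ℝ _)

end ConvexHull

lemma attn_nonempty {d n : ℕ} (z : Fin n → EuclideanSpace ℝ (Fin d)) (i : Fin n) :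
    (attn z i).Nonempty := by
  have : Nonempty (Fin n) := ⟨i⟩
  obtain ⟨j, hj⟩ := Finite.exists_max fun ℓ => ⟪z i, z ℓ⟫
  refine ⟨j, Finset.mem_filter.2 ⟨Finset.mem_univ _, ?_⟩⟩
  exact le_antisymm (le_ciSup (f := fun ℓ => ⟪z i, z ℓ⟫) (finite_range _).bddAbove j)
    (ciSup_le hj)

lemma IsDyn.mem_convexHull {d n : ℕ} {α : ℝ} (hα : 0 < α)
    {z : ℕ → Fin n → EuclideanSpace ℝ (Fin d)} (hdyn : IsDyn α z) (k : ℕ) (i : Fin n) :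
    z (k + 1) i ∈ convexHull ℝ (range (z k)) := by
  have hstep : α / (1 + α) ∈ Icc (0 : ℝ) 1 :=
    ⟨by positivity, (div_le_one (by positivity)).2 (by linarith)⟩
  rw [hdyn k i, inv_card_smul_sum_sub (attn_nonempty (z k) i)]
  exact (convex_convexHull ℝ _).add_smul_sub_mem (subset_convexHull ℝ _ (mem_range_self i))
    (inv_card_smul_sum_mem_convexHull (attn_nonempty (z k) i) (z k)) hstep

lemma IsDyn.antitone_convexHull {d n : ℕ} {α : ℝ} (hα : 0 < α)
    {z : ℕ → Fin n → EuclideanSpace ℝ (Fin d)} (hdyn : IsDyn α z) :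
    Antitone fun k => convexHull ℝ (range (z k)) :=
  antitone_nat_of_succ_le fun k =>
    convexHull_min (range_subset_iff.2 (hdyn.mem_convexHull hα k)) (convex_convexHull ℝ _)

theorem limitK_nonempty_convex_polytope_general {d n : ℕ} (hn : 0 < n) (α : ℝ) (hα : 0 < α)
    (z : ℕ → Fin n → EuclideanSpace ℝ (Fin d)) (hdyn : IsDyn α z) :
    (limitK z).Nonempty ∧ IsCompact (limitK z) ∧ Convex ℝ (limitK z) ∧
      ∃ F : Finset (EuclideanSpace ℝ (Fin d)), F.card ≤ n ∧
        limitK z = convexHull ℝ (F : Set (EuclideanSpace ℝ (Fin d))) := by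
  obtain ⟨w, hK⟩ :=
    exists_iInter_convexHull_eq_convexHull_range z (hdyn.antitone_convexHull hα)
  have hF : ((univ.image w : Finset _) : Set (EuclideanSpace ℝ (Fin d))) = range w := by simp
  rw [limitK, hK]
  refine ⟨⟨w ⟨0, hn⟩, subset_convexHull ℝ _ ⟨_, rfl⟩⟩,
    (finite_range w).isCompact_convexHull ℝ, convex_convexHull ℝ _,
    univ.image w, card_image_le.trans (by simp), by rw [hF]⟩

/-- `K = ⋂ₖ co(Z^k)` is a nonempty convex polytope: it is nonempty, compact, convex, and is
the convex hull of a finite set of at most `n` points. -/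
theorem limitK_nonempty_convex_polytope {d n : ℕ} (hd : 0 < d) (hn : 0 < n) (α : ℝ) (hα : 0 < α)
    (z : ℕ → Fin n → EuclideanSpace ℝ (Fin d)) (hdyn : IsDyn α z) :
    (limitK z).Nonempty ∧ IsCompact (limitK z) ∧ Convex ℝ (limitK z) ∧
      ∃ F : Finset (EuclideanSpace ℝ (Fin d)), F.card ≤ n ∧
        limitK z = convexHull ℝ (F : Set (EuclideanSpace ℝ (Fin d))) :=
  limitK_nonempty_convex_polytope_general hn α hα z hdyn

end
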